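/- In the group G = ⟨a, b | a³, b³, (ab)³, (ab⁻¹)³⟩, the identity [a, [a,b]] = 1 holds. -/

import Mathlib

/-! With `b³ = 1`, the relation `(ab)³ = 1` gives `b⁻¹aba = ba⁻¹b⁻¹`, and the same identity for
`b⁻¹` (using `(ab⁻¹)³ = 1`), inverted, reads `a⁻¹ba⁻¹b⁻¹ = b⁻¹ab`. Together they say that `a` commutes with
`[a, b] = a⁻¹b⁻¹ab`: both `a[a,b]` and `[a,b]a` equal `b⁻¹ab`. -/

open FreeGroup

section Group

variable {G : Type*} [Group G] {a b : G}

theorem Commute.inv_mul_inv_mul_mul_eq_one (h : Commute a b) : a⁻¹ * b⁻¹ * a * b = 1 := by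
  rw [mul_assoc _ a b, h.eq]
  group

theorem inv_mul_mul_mul_eq_of_pow_three (hb : b ^ 3 = 1) (hab : (a * b) ^ 3 = 1) :
    b⁻¹ * a * b * a = b * a⁻¹ * b⁻¹ := by
  rw [pow_three] at hb hab
  calc b⁻¹ * a * b * a = b⁻¹ * (a * b * (a * b * (a * b))) * b⁻¹ * a⁻¹ * b⁻¹ := by group
    _ = b⁻¹ * b⁻¹ * (b * (b * b)) * a⁻¹ * b⁻¹ := by rw [hab, hb]; group
    _ = b * a⁻¹ * b⁻¹ := by group

theorem commute_inv_mul_inv_mul_mul_of_pow_three (hb : b ^ 3 = 1) (hab : (a * b) ^ 3 = 1)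
    (hab' : (a * b⁻¹) ^ 3 = 1) : Commute a (a⁻¹ * b⁻¹ * a * b) := by
  have h := inv_mul_mul_mul_eq_of_pow_three hb hab
  have h' := inv_mul_mul_mul_eq_of_pow_three (by rw [inv_pow, hb, inv_one]) hab'
  rw [inv_inv] at h'
  calc a * (a⁻¹ * b⁻¹ * a * b) = (b⁻¹ * a⁻¹ * b)⁻¹ := by group
    _ = (b * a * b⁻¹ * a)⁻¹ := by rw [h']
    _ = a⁻¹ * (b * a⁻¹ * b⁻¹) := by group
    _ = a⁻¹ * (b⁻¹ * a * b * a) := by rw [h]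
    _ = (a⁻¹ * b⁻¹ * a * b) * a := by group

end Group

/-- In `G = ⟨a, b | a³, b³, (ab)³, (ab⁻¹)³⟩`, the identity `[a, [a,b]] = 1`
holds, where `[x,y] = x⁻¹y⁻¹xy`. -/
theorem stmt_3 :
    letI N : Subgroup (FreeGroup (Fin 2)) := Subgroup.normalClosure
      {(of 0 : FreeGroup (Fin 2)) ^ 3, (of 1 : FreeGroup (Fin 2)) ^ 3,
        (of 0 * of 1 : FreeGroup (Fin 2)) ^ 3,
        (of 0 * (of 1)⁻¹ : FreeGroup (Fin 2)) ^ 3}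
    letI A : FreeGroup (Fin 2) ⧸ N := QuotientGroup.mk (of 0)
    letI B : FreeGroup (Fin 2) ⧸ N := QuotientGroup.mk (of 1)
    letI C := A⁻¹ * B⁻¹ * A * B
    A⁻¹ * C⁻¹ * A * C = 1 := by
  refine (commute_inv_mul_inv_mul_mul_of_pow_three ?_ ?_ ?_).inv_mul_inv_mul_mul_eq_one <;>
    simp only [← QuotientGroup.mk_inv, ← QuotientGroup.mk_mul, ← QuotientGroup.mk_pow,
      QuotientGroup.eq_one_iff] <;>
    exact Subgroup.subset_normalClosure (by simp)
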